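/- arXiv:2605.16956 — 4 statements merged into one kernel-verified Lean document; each statement's English description precedes it below -/
import Mathlib

section
/- Let w = (w_0, w_1, w_2) ∈ ℝ³ be a fixed vector, let A be the 3×3 real matrix with all off-diagonal entries 1 and diagonal entries 0, and define (d_n)_{n≥0} in ℝ³ by d_0 = (0,0,0) and d_{n+1} = A·d_n + w. Then for all n ≥ 0, d_n = |w|·ℓ_{n−1}·(1,1,1) + c_n·w, where |w| = w_0 + w_1 + w_2, ℓ_n = Σ_{ν=0}^{n} J_ν is the Lichtenberg sequence (with ℓ_{−1} = 0), J_ν = (2^ν − (−1)^ν)/3 is the Jacobsthal sequence, and c_n = n mod 2 is the parity sequence. -/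
/-- The Jacobsthal numbers as reals: `J n = (2^n - (-1)^n)/3`. -/
noncomputable def jacobsthal (n : ℕ) : ℝ := (2 ^ n - (-1) ^ n) / 3

/-- `lichtenbergPred n = ℓ_{n-1} = ∑_{ν=0}^{n-1} J_ν` (so `lichtenbergPred 0 = ℓ_{-1} = 0`). -/
noncomputable def lichtenbergPred (n : ℕ) : ℝ := ∑ ν ∈ Finset.range n, jacobsthal ν

/-- The 3×3 matrix with off-diagonal entries 1 and diagonal entries 0, over ℝ. -/
def hanoiA : Matrix (Fin 3) (Fin 3) ℝ := !![0,1,1; 1,0,1; 1,1,0]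

/-!
Write `|v| = v 0 + v 1 + v 2` and `𝟙 = (1,1,1)`. Since `A` is the all-ones matrix minus the
identity, `A v = |v| • 𝟙 - v`. Hence the ansatz `d n = s n • 𝟙 + c n • w` is preserved by the
recursion exactly when `c (n+1) = 1 - c n` and `s (n+1) = 2 s n + c n |w|`. The second relation
is the Lichtenberg recurrence `ℓ_n = 2 ℓ_{n-1} + c_n`, which follows from `J_n = ℓ_{n-1} + c_n`.
-/

lemma cast_succ_mod_two {R : Type*} [AddGroupWithOne R] (n : ℕ) :
    (((n + 1) % 2 : ℕ) : R) = 1 - ((n % 2 : ℕ) : R) := by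
  have h : (n + 1) % 2 + n % 2 = 1 := by omega
  rw [eq_sub_iff_add_eq, ← Nat.cast_add, h, Nat.cast_one]

lemma neg_one_pow_eq_one_sub_two_mul_mod_two {R : Type*} [Ring R] (n : ℕ) :
    (-1 : R) ^ n = 1 - 2 * ((n % 2 : ℕ) : R) := by
  rcases Nat.mod_two_eq_zero_or_one n with h | h <;>
    norm_num [neg_one_pow_eq_pow_mod_two (n := n), h]

lemma jacobsthal_succ (n : ℕ) :
    jacobsthal (n + 1) = 2 * jacobsthal n + (-1) ^ n := by
  rw [jacobsthal, jacobsthal]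
  ring

lemma lichtenbergPred_succ_eq_add_jacobsthal (n : ℕ) :
    lichtenbergPred (n + 1) = lichtenbergPred n + jacobsthal n :=
  Finset.sum_range_succ _ _

lemma jacobsthal_eq_lichtenbergPred_add_mod_two (n : ℕ) :
    jacobsthal n = lichtenbergPred n + ((n % 2 : ℕ) : ℝ) := by
  induction n with
  | zero => simp [jacobsthal, lichtenbergPred]
  | succ n ih =>
    rw [jacobsthal_succ, lichtenbergPred_succ_eq_add_jacobsthal, cast_succ_mod_two,
      neg_one_pow_eq_one_sub_two_mul_mod_two, ih]
    ring

lemma lichtenbergPred_succ (n : ℕ) :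
    lichtenbergPred (n + 1) = 2 * lichtenbergPred n + ((n % 2 : ℕ) : ℝ) := by
  rw [lichtenbergPred_succ_eq_add_jacobsthal, jacobsthal_eq_lichtenbergPred_add_mod_two]
  ring

lemma hanoiA_mulVec (v : Fin 3 → ℝ) :
    hanoiA.mulVec v = (v 0 + v 1 + v 2) • ![(1 : ℝ), 1, 1] - v := by
  ext i
  fin_cases i <;> simp [hanoiA, Matrix.mulVec, dotProduct, Fin.sum_univ_three] <;> ring

theorem stmt2 (w : Fin 3 → ℝ) (d : ℕ → Fin 3 → ℝ)
    (h0 : d 0 = ![0, 0, 0])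
    (hrec : ∀ n, d (n + 1) = hanoiA.mulVec (d n) + w) :
    ∀ n, d n = ((w 0 + w 1 + w 2) * lichtenbergPred n) • ![(1 : ℝ), 1, 1]
        + ((n % 2 : ℕ) : ℝ) • w := by
  intro n
  induction n with
  | zero =>
    rw [h0]
    ext i
    fin_cases i <;> simp [lichtenbergPred]
  | succ n ih =>
    rw [hrec, ih, hanoiA_mulVec, lichtenbergPred_succ, cast_succ_mod_two]
    ext i
    simp only [Pi.add_apply, Pi.sub_apply, Pi.smul_apply, smul_eq_mul]
    fin_cases i <;> simp <;> ring
end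

section
/- Let (α_n)_{n≥0} be a sequence of nonnegative real numbers and define, for each peg k ∈ {0,1,2}, the sequence d_{n,k} by d_{0,k} = 0 and d_{n+1,k} = min{ d_{n,i} + d_{n,j} + α_n , 3·d_{n,k} + 2·α_n } where {i,j,k} = {0,1,2}. Then d_{n,0} = d_{n,1} = d_{n,2} for all n, the common value t_n satisfies t_0 = 0 and t_{n+1} = 2·t_n + α_n (i.e., the first branch always attains the minimum), and t_n = Σ_{ν=0}^{n−1} 2^{n−1−ν}·α_ν for all n ≥ 0. -/
/-!
By induction on `n`, all three `d n k` equal `t n := ∑ ν < n, 2^(n-1-ν) α ν`: if every peg carries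
the same value `t ≥ 0`, the first branch `2t + α` never exceeds the second `3t + 2α`, so the
minimum is `2t + α` at every peg, which is exactly the recursion satisfied by `t`.
-/

open Finset

theorem Fin.exists_two_ne_of_three (k : Fin 3) : ∃ i j : Fin 3, i ≠ j ∧ i ≠ k ∧ j ≠ k := by
  revert k
  decide

/-- The cost of the classical Tower of Hanoi on `n` discs when moving disc `ν + 1` costs `α ν`. -/
def hanoiCost {R : Type*} [Semiring R] (α : ℕ → R) (n : ℕ) : R :=
  ∑ ν ∈ range n, 2 ^ (n - 1 - ν) * α ν

section hanoiCost

variable {R : Type*}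

@[simp]
theorem hanoiCost_zero [Semiring R] (α : ℕ → R) : hanoiCost α 0 = 0 := by
  simp [hanoiCost]

theorem hanoiCost_succ [Semiring R] (α : ℕ → R) (n : ℕ) :
    hanoiCost α (n + 1) = 2 * hanoiCost α n + α n := by
  have hpow : ∀ ν ∈ range n, (2 : R) ^ (n + 1 - 1 - ν) * α ν = 2 * (2 ^ (n - 1 - ν) * α ν) := by
    intro ν hν
    rw [← mul_assoc, ← pow_succ', show n - 1 - ν + 1 = n + 1 - 1 - ν by
      have := mem_range.mp hν; omega]
  rw [hanoiCost, sum_range_succ, sum_congr rfl hpow, ← mul_sum, Nat.add_sub_cancel, Nat.sub_self, pow_zero,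
    one_mul, hanoiCost]

theorem hanoiCost_nonneg [Semiring R] [PartialOrder R] [IsOrderedRing R] {α : ℕ → R}
    (hα : ∀ n, 0 ≤ α n) (n : ℕ) : 0 ≤ hanoiCost α n :=
  sum_nonneg fun ν _ => mul_nonneg (pow_nonneg zero_le_two _) (hα ν)

end hanoiCost

theorem min_add_add_three_mul (t a : ℝ) (ht : 0 ≤ t) (ha : 0 ≤ a) :
    min (t + t + a) (3 * t + 2 * a) = 2 * t + a := by
  rw [min_eq_left (by linarith)]
  ring

theorem stmt3 (α : ℕ → ℝ) (hα : ∀ n, 0 ≤ α n)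
    (d : ℕ → Fin 3 → ℝ)
    (h0 : ∀ k, d 0 k = 0)
    (hrec : ∀ (n : ℕ) (i j k : Fin 3), i ≠ j → i ≠ k → j ≠ k →
      d (n + 1) k = min (d n i + d n j + α n) (3 * d n k + 2 * α n)) :
    (∀ (n : ℕ) (k k' : Fin 3), d n k = d n k') ∧
    (∀ (n : ℕ) (k : Fin 3), d (n + 1) k = 2 * d n k + α n) ∧
    (∀ (n : ℕ) (k : Fin 3), d n k = ∑ ν ∈ Finset.range n, 2 ^ (n - 1 - ν) * α ν) := by
  have hd : ∀ n k, d n k = hanoiCost α n := by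
    intro n
    induction n with
    | zero => simpa using h0
    | succ n ih =>
      intro k
      obtain ⟨i, j, hij, hik, hjk⟩ := Fin.exists_two_ne_of_three k
      rw [hrec n i j k hij hik hjk, ih, ih, ih,
        min_add_add_three_mul _ _ (hanoiCost_nonneg hα n) (hα n), hanoiCost_succ]
  refine ⟨fun n k k' => by rw [hd, hd], fun n k => by rw [hd, hd, hanoiCost_succ], hd⟩
end

section
/- Let A be the 3×3 real matrix with all off-diagonal entries 1 and diagonal entries 0, let w_n = (n+1, 0, n+1) ∈ ℝ³, and define (d_n)_{n≥0} by d_0 = (0,0,0) and d_{n+1} = A·d_n + w_n. Then for all n ≥ 0, d_{n,0} = d_{n,2} = Σ_{ν=0}^{n} ℓ_ν and d_{n,1} = 2·Σ_{ν=0}^{n−1} ℓ_ν, where ℓ_ν = Σ_{μ=0}^{ν} J_μ is the Lichtenberg sequence and J_μ = (2^μ − (−1)^μ)/3 is the Jacobsthal sequence. -/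
/-- The Lichtenberg numbers: `ℓ n = ∑_{μ=0}^{n} J_μ`. -/
noncomputable def lichtenberg (n : ℕ) : ℝ := ∑ μ ∈ Finset.range (n + 1), jacobsthal μ

lemma lich_closed (n : ℕ) :
    lichtenberg n = (2 ^ (n + 2) - 3 + (-1) ^ (n + 1)) / 6 := by
  induction n with
  | zero => simp [lichtenberg, jacobsthal]; norm_num
  | succ n ih =>
      have : lichtenberg (n + 1) = lichtenberg n + jacobsthal (n + 1) := by
        simp [lichtenberg, Finset.sum_range_succ]
      rw [this, ih, jacobsthal]
      ring

lemma lich_sum (n : ℕ) :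
    ∑ ν ∈ Finset.range n, lichtenberg ν
      = (2 ^ (n + 3) - 9 - 6 * n + (-1) ^ n) / 12 := by
  induction n with
  | zero => norm_num
  | succ n ih =>
      rw [Finset.sum_range_succ, ih, lich_closed]
      push_cast
      ring

theorem stmt8 (d : ℕ → Fin 3 → ℝ)
    (h0 : d 0 = ![0, 0, 0])
    (hrec : ∀ n, d (n + 1) = hanoiA.mulVec (d n) + ![(n : ℝ) + 1, 0, (n : ℝ) + 1]) :
    ∀ n : ℕ,
      d n 0 = ∑ ν ∈ Finset.range (n + 1), lichtenberg ν ∧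
      d n 2 = ∑ ν ∈ Finset.range (n + 1), lichtenberg ν ∧
      d n 1 = 2 * ∑ ν ∈ Finset.range n, lichtenberg ν := by
  intro n
  induction n with
  | zero => simp [h0, lichtenberg, jacobsthal]
  | succ n ih =>
      obtain ⟨h0', h2', h1'⟩ := ih
      rw [hrec n]
      refine ⟨?_, ?_, ?_⟩ <;>
        simp [hanoiA, Matrix.mulVec, dotProduct, Fin.sum_univ_three,
          h0', h2', h1', lich_sum] <;>
        push_cast <;>
        ring
end

section
/- Let P be a real polynomial of degree δ ≥ 0. Then there exists a unique real polynomial Q such that 2·Q(x) − Q(x+1) = P(x) for all x ∈ ℝ, and this Q has degree δ. Moreover, if P has integer coefficients, then Q has integer coefficients. -/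
open Polynomial

noncomputable def Tm (Q : ℝ[X]) : ℝ[X] := C 2 * Q - Q.comp (X + 1)

lemma Tm_sub (a b : ℝ[X]) : Tm (a - b) = Tm a - Tm b := by
  simp only [Tm, sub_comp]; ring

lemma Tm_add (a b : ℝ[X]) : Tm (a + b) = Tm a + Tm b := by
  simp only [Tm, add_comp]; ring

lemma natDegree_X_add_one : (X + 1 : ℝ[X]).natDegree = 1 := by
  simpa using natDegree_X_add_C (1 : ℝ)

lemma comp_deg (Q : ℝ[X]) : (Q.comp (X + 1)).natDegree = Q.natDegree := by
  rw [natDegree_comp, natDegree_X_add_one, mul_one]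

lemma comp_lead (Q : ℝ[X]) :
    (Q.comp (X + 1)).leadingCoeff = Q.leadingCoeff := by
  rw [leadingCoeff_comp (by rw [natDegree_X_add_one]; norm_num)]
  have : (X + 1 : ℝ[X]).leadingCoeff = 1 := by
    simpa using leadingCoeff_X_add_C (1 : ℝ)
  simp [this]

lemma Tm_inj (Q : ℝ[X]) (h : Tm Q = 0) : Q = 0 := by
  by_contra hQ
  have h1 : C 2 * Q = Q.comp (X + 1) := sub_eq_zero.mp h
  have h2 := congrArg leadingCoeff h1
  rw [comp_lead Q, leadingCoeff_mul, leadingCoeff_C] at h2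
  have ha : Q.leadingCoeff ≠ 0 := leadingCoeff_ne_zero.mpr hQ
  have : (2 : ℝ) * Q.leadingCoeff = 1 * Q.leadingCoeff := by rw [h2, one_mul]
  have h3 := mul_right_cancel₀ ha this
  norm_num at h3

lemma Tm_natDegree (Q : ℝ[X]) (hQ : Q ≠ 0) : (Tm Q).natDegree = Q.natDegree := by
  set d := Q.natDegree with hd
  have h1 : (Q.comp (X + 1)).coeff d = Q.leadingCoeff := by
    conv_lhs => rw [hd, ← comp_deg Q]
    rw [coeff_natDegree, comp_lead Q]
  have hc : (Tm Q).coeff d = Q.leadingCoeff := by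
    simp only [Tm, coeff_sub, coeff_C_mul, h1, leadingCoeff, ← hd]
    ring
  have ha : Q.leadingCoeff ≠ 0 := leadingCoeff_ne_zero.mpr hQ
  refine le_antisymm ?_ (le_natDegree_of_ne_zero (by rw [hc]; exact ha))
  refine le_trans (natDegree_sub_le _ _) ?_
  simp only [max_le_iff]
  exact ⟨natDegree_C_mul_le _ _, le_of_eq (comp_deg Q)⟩

lemma exists_Tm : ∀ n : ℕ, ∀ P : ℝ[X], P.natDegree ≤ n →
    ∃ Q : ℝ[X], Tm Q = P ∧
      ((∀ k : ℕ, ∃ m : ℤ, P.coeff k = (m : ℝ)) → ∀ k : ℕ, ∃ m : ℤ, Q.coeff k = (m : ℝ)) := by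
  intro n
  induction n with
  | zero =>
    intro P hP
    refine ⟨P, ?_, fun h k => h k⟩
    rw [Polynomial.eq_C_of_natDegree_eq_zero (Nat.le_zero.mp hP)]
    rw [Tm, C_comp, ← C_mul, ← C_sub]
    congr 1
    ring
  | succ n ih =>
    intro P hP
    by_cases hdeg : P.natDegree ≤ n
    · exact ih P hdeg
    push_neg at hdeg
    have hPd : P.natDegree = n + 1 := le_antisymm hP hdeg
    set c := P.coeff (n + 1) with hc
    set M : ℝ[X] := C c * X ^ (n + 1) with hM
    have hTM : Tm M = C 2 * (C c * X ^ (n + 1)) - C c * (X + 1) ^ (n + 1) := by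
      simp [Tm, hM, mul_comp, C_comp, X_comp, pow_comp]
    have hTMcoeff : ∀ k, (Tm M).coeff k =
        2 * c * (X ^ (n+1) : ℝ[X]).coeff k - c * ((n+1).choose k : ℝ) := by
      intro k
      rw [hTM]
      simp [coeff_C_mul, coeff_X_add_one_pow, mul_assoc]
    have hTMtop : (Tm M).coeff (n + 1) = c := by
      rw [hTMcoeff]; simp; ring
    have hTMdegle : (Tm M).natDegree ≤ n + 1 := by
      rw [hTM]
      refine le_trans (natDegree_sub_le _ _) ?_
      simp only [max_le_iff]
      constructor
      · refine le_trans (natDegree_C_mul_le _ _) ?_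
        refine le_trans (natDegree_C_mul_le _ _) ?_
        simp
      · refine le_trans (natDegree_C_mul_le _ _) ?_
        refine le_trans natDegree_pow_le ?_
        simp [natDegree_X_add_one]
    have hP0deg : (P - Tm M).natDegree ≤ n := by
      refine natDegree_le_iff_coeff_eq_zero.mpr ?_
      intro k hk
      rcases Nat.lt_or_ge (n+1) k with hk1 | hk1
      · rw [coeff_sub, Polynomial.coeff_eq_zero_of_natDegree_lt (by omega),
          Polynomial.coeff_eq_zero_of_natDegree_lt (by omega), sub_zero]
      · have hk2 : k = n + 1 := by omega
        rw [hk2, coeff_sub, hTMtop, ← hc, sub_self]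
    obtain ⟨Q0, hQ0, hQ0int⟩ := ih (P - Tm M) hP0deg
    refine ⟨M + Q0, ?_, ?_⟩
    · rw [Tm_add, hQ0]; ring
    · intro hint k
      obtain ⟨mc, hmc⟩ := hint (n + 1)
      have hcm : c = (mc : ℝ) := by rw [hc]; exact hmc
      have hMint : ∀ j, ∃ m : ℤ, (Tm M).coeff j = (m : ℝ) := by
        intro j
        rw [hTMcoeff, coeff_X_pow]
        by_cases hj : j = n + 1
        · refine ⟨2 * mc - mc * ((n+1).choose j : ℤ), ?_⟩
          simp only [hj, if_pos rfl, hcm]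
          push_cast
          ring
        · refine ⟨-(mc * ((n+1).choose j : ℤ)), ?_⟩
          rw [if_neg (by simpa using hj)]
          rw [hcm]
          push_cast
          ring
      have hQ0' := hQ0int (fun j => by
        obtain ⟨a, ha⟩ := hint j
        obtain ⟨b, hb⟩ := hMint j
        exact ⟨a - b, by rw [coeff_sub, ha, hb]; push_cast; ring⟩)
      obtain ⟨a, ha⟩ := hQ0' k
      have hMk : ∃ m : ℤ, M.coeff k = (m : ℝ) := by
        rw [hM, coeff_C_mul, coeff_X_pow]
        by_cases hk : k = n + 1
        · exact ⟨mc, by rw [if_pos (by simpa using hk), hcm, mul_one]⟩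
        · exact ⟨0, by rw [if_neg (by simpa using hk), mul_zero]; simp⟩
      obtain ⟨b, hb⟩ := hMk
      exact ⟨b + a, by rw [coeff_add, ha, hb]; push_cast; ring⟩

lemma Tm_of_eval {Q P : ℝ[X]} (h : ∀ x : ℝ, 2 * Q.eval x - Q.eval (x + 1) = P.eval x) :
    Tm Q = P := by
  apply Polynomial.funext
  intro x
  simp only [Tm, eval_sub, eval_mul, eval_C, eval_comp, eval_add, eval_X, eval_one]
  exact h x

theorem stmt9 (δ : ℕ) (P : Polynomial ℝ) (hP : P ≠ 0) (hdeg : P.natDegree = δ) :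
    (∃! Q : Polynomial ℝ, ∀ x : ℝ, 2 * Q.eval x - Q.eval (x + 1) = P.eval x) ∧
    (∀ Q : Polynomial ℝ, (∀ x : ℝ, 2 * Q.eval x - Q.eval (x + 1) = P.eval x) →
      Q.natDegree = δ ∧
      ((∀ n : ℕ, ∃ m : ℤ, P.coeff n = (m : ℝ)) →
        ∀ n : ℕ, ∃ m : ℤ, Q.coeff n = (m : ℝ))) := by
  obtain ⟨Q₀, hQ₀, hQ₀int⟩ := exists_Tm P.natDegree P le_rfl
  have heval : ∀ x : ℝ, 2 * Q₀.eval x - Q₀.eval (x + 1) = P.eval x := by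
    intro x
    have := congrArg (fun p => Polynomial.eval x p) hQ₀
    simpa [Tm, eval_comp] using this
  have huniq : ∀ Q : ℝ[X], (∀ x : ℝ, 2 * Q.eval x - Q.eval (x + 1) = P.eval x) → Q = Q₀ := by
    intro Q hQ
    have h1 : Tm Q = P := Tm_of_eval hQ
    have h2 : Tm (Q - Q₀) = 0 := by rw [Tm_sub, h1, hQ₀, sub_self]
    have := Tm_inj _ h2
    exact sub_eq_zero.mp this
  constructor
  · exact ⟨Q₀, heval, huniq⟩
  · intro Q hQ
    have h1 : Tm Q = P := Tm_of_eval hQ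
    have hQne : Q ≠ 0 := by
      intro h0
      apply hP
      rw [← h1, h0]
      simp [Tm]
    constructor
    · rw [← hdeg, ← h1, Tm_natDegree Q hQne]
    · intro hint
      rw [huniq Q hQ]
      exact hQ₀int hint
end
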